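/- arXiv:2109.00519 — 7 statements merged into one kernel-verified Lean document; each statement's English description precedes it below -/
import Mathlib

section
/- Let R be a commutative ring, S a multiplicatively closed subset of R, and M an R-module with submodules K ≤ N ≤ M. Then N is an S-small submodule of M if and only if K is an S-small submodule of M and N/K is an S-small submodule of M/K. -/
variable {R : Type*} [CommRing R]

/-- `(0 :_M I)` : the elements of `M` annihilated by the ideal `I`. -/
def ann0 (R : Type*) [CommRing R] (M : Type*) [AddCommGroup M] [Module R M]
    (I : Ideal R) : Submodule R M :=
  Submodule.torsionBySet R M (I : Set R)

/-- `N` is an S-small submodule: `sM ≤ N + L` implies `tM ≤ L` for some `t ∈ S`. -/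
def SSmall (S : Set R) {M : Type*} [AddCommGroup M] [Module R M] (N : Submodule R M) : Prop :=
  ∀ (L : Submodule R M), ∀ s ∈ S, (∀ m : M, s • m ∈ N ⊔ L) → ∃ t ∈ S, ∀ m : M, t • m ∈ L

/-- `N` is an S-essential submodule: `N ⊓ L = 0` implies `sL = 0` for some `s ∈ S`. -/
def SEssential (S : Set R) {M : Type*} [AddCommGroup M] [Module R M] (N : Submodule R M) : Prop :=
  ∀ L : Submodule R M, N ⊓ L = ⊥ → ∃ s ∈ S, ∀ x ∈ L, s • x = (0 : M)

/-- `M` is an S-comultiplication module. -/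
def SComult (S : Set R) (M : Type*) [AddCommGroup M] [Module R M] : Prop :=
  ∀ N : Submodule R M, ∃ s ∈ S, ∃ I : Ideal R,
    (∀ x ∈ ann0 R M I, s • x ∈ N) ∧ N ≤ ann0 R M I

/-- `M` satisfies the S-double annihilator condition. -/
def SDAC (S : Set R) (M : Type*) [AddCommGroup M] [Module R M] : Prop :=
  ∀ I : Ideal R, ∃ s ∈ S, ∀ r ∈ (ann0 R M I).annihilator, s * r ∈ I

/-- `L` is an S-copure submodule: `s(L :_M I) ⊆ L + (0 :_M I)` for all ideals `I`. -/
def SCopure (S : Set R) {M : Type*} [AddCommGroup M] [Module R M] (L : Submodule R M) : Prop :=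
  ∃ s ∈ S, ∀ (I : Ideal R) (m : M), (∀ a ∈ I, a • m ∈ L) → s • m ∈ L ⊔ ann0 R M I

/-- `P` is a prime submodule of `M`. -/
def IsPrimeSubmodule {M : Type*} [AddCommGroup M] [Module R M] (P : Submodule R M) : Prop :=
  P ≠ ⊤ ∧ ∀ (a : R) (m : M), a • m ∈ P → a ∈ P.colon ⊤ ∨ m ∈ P

/-- `P` is an S-prime submodule of `M`. -/
def SPrime (S : Set R) {M : Type*} [AddCommGroup M] [Module R M] (P : Submodule R M) : Prop :=
  ((P.colon ⊤ : Set R) ∩ S = ∅) ∧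
    ∃ s ∈ S, ∀ (a : R) (m : M), a • m ∈ P → s * a ∈ P.colon ⊤ ∨ s • m ∈ P

/-- `N` is an S-quasi-copure submodule: every S-prime submodule containing `N` is S-copure. -/
def SQuasiCopure (S : Set R) {M : Type*} [AddCommGroup M] [Module R M] (N : Submodule R M) : Prop :=
  ∀ P : Submodule R M, SPrime S P → N ≤ P → SCopure S P

/-- `N` is a weak S-copure submodule: every prime submodule containing `N` is S-copure. -/
def WeakSCopure (S : Set R) {M : Type*} [AddCommGroup M] [Module R M] (N : Submodule R M) : Prop :=
  ∀ P : Submodule R M, IsPrimeSubmodule P → N ≤ P → SCopure S P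

variable {M : Type*} [AddCommGroup M] [Module R M]

namespace SSmall

variable {M' : Type*} [AddCommGroup M'] [Module R M'] {S : Set R}

theorem of_le {K N : Submodule R M} (hKN : K ≤ N) (hN : SSmall S N) : SSmall S K :=
  fun L s hs h ↦ hN L s hs fun m ↦ sup_le_sup_right hKN L (h m)

theorem map_of_surjective {N : Submodule R M} {f : M →ₗ[R] M'} (hf : Function.Surjective f)
    (hN : SSmall S N) : SSmall S (N.map f) := by
  intro L' s hs h
  have hsup : ∀ m : M, s • m ∈ N ⊔ L'.comap f := by
    intro m
    have hfm : f (s • m) ∈ (N ⊔ L'.comap f).map f := by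
      rw [Submodule.map_sup, Submodule.map_comap_eq_of_surjective hf, map_smul]
      exact h (f m)
    rwa [← Submodule.mem_comap, Submodule.comap_map_eq_self
      (le_sup_of_le_right (LinearMap.ker_le_comap f))] at hfm
  obtain ⟨t, ht, htL⟩ := hN _ s hs hsup
  refine ⟨t, ht, fun y ↦ ?_⟩
  obtain ⟨m, rfl⟩ := hf y
  simpa only [Submodule.mem_comap, map_smul] using htL m

theorem of_map_of_surjective {N : Submodule R M} {f : M →ₗ[R] M'} (hf : Function.Surjective f)
    (hker : SSmall S (LinearMap.ker f)) (hN : SSmall S (N.map f)) : SSmall S N := by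
  intro L s hs h
  have hmap : ∀ y : M', s • y ∈ N.map f ⊔ L.map f := by
    intro y
    obtain ⟨m, rfl⟩ := hf y
    rw [← map_smul, ← Submodule.map_sup]
    exact Submodule.mem_map_of_mem (h m)
  obtain ⟨t, ht, htL⟩ := hN _ s hs hmap
  refine hker L t ht fun m ↦ ?_
  have htm : t • m ∈ (L.map f).comap f := by
    simpa only [Submodule.mem_comap, map_smul] using htL (f m)
  rwa [Submodule.comap_map_eq, sup_comm] at htm

end SSmall

theorem stmt_4_general (S : Set R) (K N : Submodule R M) (hKN : K ≤ N) :
    SSmall S N ↔ SSmall S K ∧ SSmall S (N.map K.mkQ) := by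
  refine ⟨fun hN ↦ ⟨hN.of_le hKN, hN.map_of_surjective K.mkQ_surjective⟩, fun ⟨hK, hNK⟩ ↦ ?_⟩
  exact .of_map_of_surjective K.mkQ_surjective (by rwa [Submodule.ker_mkQ]) hNK

theorem stmt_4 (S : Set R) (hS0 : (0:R) ∉ S) (hS1 : (1:R) ∈ S) (hSm : ∀ s ∈ S, ∀ t ∈ S, s * t ∈ S) (K N : Submodule R M) (hKN : K ≤ N) :
    SSmall S N ↔ SSmall S K ∧ SSmall S (N.map K.mkQ) :=
  stmt_4_general S K N hKN
end

section
/- Let R be a commutative ring, S a multiplicatively closed subset of R, and M an R-module with submodules K ≤ N ≤ M. If N is an S-small submodule of M, then N/K is an S-small submodule of M/K. -/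
variable {R : Type*} [CommRing R]

variable {M : Type*} [AddCommGroup M] [Module R M]

theorem SSmall.map_of_surjective_s6 {S : Set R} {M' : Type*} [AddCommGroup M'] [Module R M']
    {N : Submodule R M} (h : SSmall S N) {f : M →ₗ[R] M'} (hf : Function.Surjective f) :
    SSmall S (N.map f) := by
  intro L s hs hsL
  -- Since `ker f ≤ f⁻¹ L`, pulling back gives `f⁻¹ (f N ⊔ L) = N ⊔ f⁻¹ L`.
  obtain ⟨t, ht, htL⟩ := h (L.comap f) s hs fun m => by
    rw [← Submodule.comap_map_sup_of_comap_le (le_sup_right : L.comap f ≤ N ⊔ L.comap f)]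
    exact sup_le_sup_right (Submodule.map_mono le_sup_left) L (by simpa using hsL (f m))
  exact ⟨t, ht, hf.forall.2 fun m => by simpa using htL m⟩

theorem stmt_6_general (S : Set R) (K N : Submodule R M)
    (h : SSmall S N) : SSmall S (N.map K.mkQ) :=
  h.map_of_surjective_s6 K.mkQ_surjective

theorem stmt_6 (S : Set R) (hS0 : (0:R) ∉ S) (hS1 : (1:R) ∈ S) (hSm : ∀ s ∈ S, ∀ t ∈ S, s * t ∈ S) (K N : Submodule R M) (hKN : K ≤ N)
    (h : SSmall S N) : SSmall S (N.map K.mkQ) :=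
  stmt_6_general S K N h
end

section
/- Let R be a commutative ring, S a multiplicatively closed subset of R, and M a faithful S-strong comultiplication R-module. If N is an S-small submodule of M, then there exist an ideal I of R which is S-essential in R and an element t ∈ S such that t·(0 :_M I) ≤ N ≤ (0 :_M I). -/
/-! Take `I` with `s₀(0 :_M I) ≤ N ≤ (0 :_M I)` from comultiplication. If `I ∩ J = 0`, then
`(0 :_M I ∩ J) = M`, and the S-strong property gives `sM ≤ (0 :_M I) + (0 :_M J)`, hence
`s₀ s M ≤ N + (0 :_M J)`. Smallness of `N` yields `tM ≤ (0 :_M J)`, i.e. `tJ` annihilates `M`,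
so `tJ = 0` by faithfulness. -/

variable {R : Type*} [CommRing R]

variable {M : Type*} [AddCommGroup M] [Module R M]

section

variable {S : Set R}

theorem mem_ann0 {I : Ideal R} {x : M} : x ∈ ann0 R M I ↔ ∀ a ∈ I, a • x = 0 :=
  (Submodule.mem_torsionBySet_iff _ _).trans Subtype.forall

theorem ann0_bot : ann0 R M ⊥ = ⊤ :=
  eq_top_iff.2 fun _ _ => mem_ann0.2 fun a ha => by rw [(Submodule.mem_bot R).1 ha, zero_smul]

theorem le_annihilator_ann0 (I : Ideal R) : I ≤ (ann0 R M I).annihilator :=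
  fun a ha => Submodule.mem_annihilator.2 fun _ hx => mem_ann0.1 hx a ha

theorem SDAC.exists_smul_mem_of_ann0_le (hdac : SDAC S M) {I L : Ideal R}
    (h : ann0 R M I ≤ ann0 R M L) : ∃ s ∈ S, ∀ a ∈ L, s * a ∈ I := by
  obtain ⟨s, hs, hsI⟩ := hdac I
  exact ⟨s, hs, fun a ha => hsI a (Submodule.annihilator_mono h (le_annihilator_ann0 L ha))⟩

/-- Comultiplication writes `(0 :_M I) + (0 :_M J)` as `(0 :_M L)` up to `S`; the S-DAC then pushes
a multiple of `L` into `I ∩ J`, so that multiple kills `(0 :_M I ∩ J)`. -/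
theorem exists_smul_ann0_inf_mem_sup (hSm : ∀ s ∈ S, ∀ t ∈ S, s * t ∈ S)
    (hcom : SComult S M) (hdac : SDAC S M) (I J : Ideal R) :
    ∃ s ∈ S, ∀ x ∈ ann0 R M (I ⊓ J), s • x ∈ ann0 R M I ⊔ ann0 R M J := by
  obtain ⟨s, hs, L, hL, hsup⟩ := hcom (ann0 R M I ⊔ ann0 R M J)
  obtain ⟨sI, hsI, hLI⟩ := hdac.exists_smul_mem_of_ann0_le (le_sup_left.trans hsup)
  obtain ⟨sJ, hsJ, hLJ⟩ := hdac.exists_smul_mem_of_ann0_le (le_sup_right.trans hsup)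
  refine ⟨s * (sI * sJ), hSm _ hs _ (hSm _ hsI _ hsJ), fun x hx => ?_⟩
  have hLinf : ∀ a ∈ L, sI * sJ * a ∈ I ⊓ J := fun a ha =>
    Ideal.mem_inf.2 ⟨by simpa only [mul_right_comm] using I.mul_mem_right sJ (hLI a ha),
      by simpa only [mul_assoc] using J.mul_mem_left sI (hLJ a ha)⟩
  have hxL : (sI * sJ) • x ∈ ann0 R M L := mem_ann0.2 fun a ha => by
    rw [smul_smul, mul_comm]
    exact mem_ann0.1 hx _ (hLinf a ha)
  simpa only [mul_smul] using hL _ hxL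

theorem smul_eq_zero_of_forall_smul_mem_ann0 (hfaith : (⊤ : Submodule R M).annihilator = ⊥)
    {J : Ideal R} {t : R} (ht : ∀ m : M, t • m ∈ ann0 R M J) : ∀ a ∈ J, t * a = 0 := by
  intro a ha
  have hta : t * a ∈ (⊤ : Submodule R M).annihilator := Submodule.mem_annihilator.2 fun m _ => by
    rw [mul_comm, mul_smul]
    exact mem_ann0.1 (ht m) a ha
  rwa [hfaith, Submodule.mem_bot] at hta

theorem SSmall.sEssential_of_smul_ann0_le {N : Submodule R M} (hN : SSmall S N)
    (hSm : ∀ s ∈ S, ∀ t ∈ S, s * t ∈ S)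
    (hfaith : (⊤ : Submodule R M).annihilator = ⊥) (hcom : SComult S M) (hdac : SDAC S M)
    {I : Ideal R} {s₀ : R} (hs₀ : s₀ ∈ S)
    (hI : ∀ x ∈ ann0 R M I, s₀ • x ∈ N) : SEssential S I := by
  intro J hIJ
  obtain ⟨s, hs, hsup⟩ := exists_smul_ann0_inf_mem_sup hSm hcom hdac I J
  rw [hIJ, ann0_bot] at hsup
  have hNJ : ∀ m : M, (s₀ * s) • m ∈ N ⊔ ann0 R M J := fun m => by
    obtain ⟨x, hx, y, hy, hxy⟩ := Submodule.mem_sup.1 (hsup m Submodule.mem_top)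
    rw [mul_smul, ← hxy, smul_add]
    exact Submodule.add_mem_sup (hI x hx) (Submodule.smul_mem _ _ hy)
  obtain ⟨t, ht, htJ⟩ := hN _ _ (hSm _ hs₀ _ hs) hNJ
  exact ⟨t, ht, smul_eq_zero_of_forall_smul_mem_ann0 hfaith htJ⟩

end

theorem stmt_7_general (S : Set R) (hSm : ∀ s ∈ S, ∀ t ∈ S, s * t ∈ S)
    (hfaith : (⊤ : Submodule R M).annihilator = ⊥)
    (hcom : SComult S M) (hdac : SDAC S M)
    (N : Submodule R M) (h : SSmall S N) :
    ∃ I : Ideal R, SEssential S I ∧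
      ∃ t ∈ S, (∀ x ∈ ann0 R M I, t • x ∈ N) ∧ N ≤ ann0 R M I := by
  obtain ⟨s₀, hs₀, I, hsI, hNI⟩ := hcom N
  exact ⟨I, h.sEssential_of_smul_ann0_le hSm hfaith hcom hdac hs₀ hsI, s₀, hs₀, hsI, hNI⟩

theorem stmt_7 (S : Set R) (hS0 : (0:R) ∉ S) (hS1 : (1:R) ∈ S) (hSm : ∀ s ∈ S, ∀ t ∈ S, s * t ∈ S)
    (hfaith : (⊤ : Submodule R M).annihilator = ⊥)
    (hcom : SComult S M) (hdac : SDAC S M)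
    (N : Submodule R M) (h : SSmall S N) :
    ∃ I : Ideal R, SEssential S I ∧
      ∃ t ∈ S, (∀ x ∈ ann0 R M I, t • x ∈ N) ∧ N ≤ ann0 R M I :=
  stmt_7_general S hSm hfaith hcom hdac N h
end

section
/- Let R be a commutative ring, S a multiplicatively closed subset of R, and M a torsion-free S-strong comultiplication R-module. If N is an S-essential submodule of M, then there exist an S-small ideal I of R and s ∈ S such that s(0 :_M I) ≤ N ≤ (0 :_M I). -/
/-! Take the ideal `I` that the S-comultiplication property attaches to `N`. If `s ∈ I + J` with
`s ∈ S`, then `N ∩ (0 :_M J) ⊆ (0 :_M (I + J)) = 0`, since `s ≠ 0` and `M` is torsion-free. So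
S-essentiality gives `u ∈ S` killing `(0 :_M J)`, and the S-double annihilator condition moves a
multiple `vu ∈ S` of it into `J`. -/

variable {R : Type*} [CommRing R]

variable {M : Type*} [AddCommGroup M] [Module R M]

theorem ann0_inf_ann0_le_ann0_sup (I J : Ideal R) :
    ann0 R M I ⊓ ann0 R M J ≤ ann0 R M (I ⊔ J) := by
  rintro m ⟨hmI, hmJ⟩
  refine (Submodule.mem_torsionBySet_iff _ _).2 fun ⟨r, hr⟩ => ?_
  obtain ⟨i, hi, j, hj, rfl⟩ := Submodule.mem_sup.1 hr
  rw [add_smul, (Submodule.mem_torsionBySet_iff _ _).1 hmI ⟨i, hi⟩,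
    (Submodule.mem_torsionBySet_iff _ _).1 hmJ ⟨j, hj⟩, add_zero]

theorem ann0_eq_bot_of_mem (htf : ∀ (r : R) (m : M), r • m = 0 → r = 0 ∨ m = 0)
    {I : Ideal R} {r : R} (hr : r ≠ 0) (hrI : r ∈ I) : ann0 R M I = ⊥ :=
  eq_bot_iff.2 fun m hm =>
    ((htf r m ((Submodule.mem_torsionBySet_iff _ _).1 hm ⟨r, hrI⟩)).resolve_left hr :)

theorem sSmall_of_sEssential_le_ann0 {S : Set R} (hS0 : (0 : R) ∉ S)
    (hSm : ∀ s ∈ S, ∀ t ∈ S, s * t ∈ S)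
    (htf : ∀ (r : R) (m : M), r • m = 0 → r = 0 ∨ m = 0) (hdac : SDAC S M)
    {N : Submodule R M} (hN : SEssential S N) {I : Ideal R} (hNI : N ≤ ann0 R M I) :
    SSmall S I := by
  intro J s hs hsJ
  have hsIJ : s ∈ I ⊔ J := by simpa using hsJ 1
  have hdisj : N ⊓ ann0 R M J = ⊥ := eq_bot_iff.2 <|
    calc N ⊓ ann0 R M J ≤ ann0 R M I ⊓ ann0 R M J := inf_le_inf_right _ hNI
      _ ≤ ann0 R M (I ⊔ J) := ann0_inf_ann0_le_ann0_sup I J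
      _ = ⊥ := ann0_eq_bot_of_mem htf (ne_of_mem_of_not_mem hs hS0) hsIJ
  obtain ⟨u, hu, hukill⟩ := hN _ hdisj
  obtain ⟨v, hv, hvJ⟩ := hdac J
  have hvu : v * u ∈ J := hvJ u (Submodule.mem_annihilator.2 hukill)
  exact ⟨v * u, hSm v hv u hu, fun m => by rw [smul_eq_mul]; exact Ideal.mul_mem_right m J hvu⟩

theorem stmt_9_general (S : Set R) (hS0 : (0:R) ∉ S) (hSm : ∀ s ∈ S, ∀ t ∈ S, s * t ∈ S)
    (htf : ∀ (r : R) (m : M), r • m = 0 → r = 0 ∨ m = 0)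
    (hcom : SComult S M) (hdac : SDAC S M)
    (N : Submodule R M) (h : SEssential S N) :
    ∃ I : Ideal R, SSmall S I ∧
      ∃ s ∈ S, (∀ x ∈ ann0 R M I, s • x ∈ N) ∧ N ≤ ann0 R M I := by
  obtain ⟨s, hs, I, hsI, hNI⟩ := hcom N
  exact ⟨I, sSmall_of_sEssential_le_ann0 hS0 hSm htf hdac h hNI, s, hs, hsI, hNI⟩

theorem stmt_9 (S : Set R) (hS0 : (0:R) ∉ S) (hS1 : (1:R) ∈ S) (hSm : ∀ s ∈ S, ∀ t ∈ S, s * t ∈ S)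
    (htf : ∀ (r : R) (m : M), r • m = 0 → r = 0 ∨ m = 0)
    (hcom : SComult S M) (hdac : SDAC S M)
    (N : Submodule R M) (h : SEssential S N) :
    ∃ I : Ideal R, SSmall S I ∧
      ∃ s ∈ S, (∀ x ∈ ann0 R M I, s • x ∈ N) ∧ N ≤ ann0 R M I :=
  stmt_9_general S hS0 hSm htf hcom hdac N h
end

section
/- Let R be a commutative ring, S a multiplicatively closed subset of R, and M a torsion-free S-strong comultiplication R-module. If N is a submodule of M such that s(0 :_M I) ≤ N ≤ (0 :_M I) for some S-small ideal I of R and some s ∈ S, then N is an S-essential submodule of M. -/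
variable {R : Type*} [CommRing R]

variable {M : Type*} [AddCommGroup M] [Module R M]

/-! Given `L` with `N ⊓ L = ⊥`, write `t(0 :_M J) ≤ L ≤ (0 :_M J)` by S-comultiplication. An element
of `(0 :_M (I + J))` is multiplied by `st` into `N ⊓ L = 0`, so torsion-freeness forces
`(0 :_M (I + J)) = 0`. Its annihilator is then all of `R`, and S-DAC puts some `u ∈ S` into `I + J`;
S-smallness of `I` then gives `v ∈ S ∩ J`, and `v` kills `L ≤ (0 :_M J)`. -/

theorem smul_eq_zero_of_mem_ann0 {I : Ideal R} {a : R} (ha : a ∈ I) {x : M}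
    (hx : x ∈ ann0 R M I) : a • x = 0 :=
  (Submodule.mem_torsionBySet_iff _ _).1 hx ⟨a, ha⟩

theorem ann0_antitone {I J : Ideal R} (h : I ≤ J) : ann0 R M J ≤ ann0 R M I :=
  Submodule.torsionBySet_le_torsionBySet_of_subset h

theorem mul_smul_eq_zero_of_mem_ann0_sup {N L : Submodule R M} {I J : Ideal R} {s t : R}
    (hN : ∀ x ∈ ann0 R M I, s • x ∈ N) (hL : ∀ x ∈ ann0 R M J, t • x ∈ L) (hNL : N ⊓ L = ⊥)
    {x : M} (hx : x ∈ ann0 R M (I ⊔ J)) : (s * t) • x = 0 := by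
  have hxN : (s * t) • x ∈ N := by
    rw [mul_comm, mul_smul]
    exact N.smul_mem t (hN x (ann0_antitone le_sup_left hx))
  have hxL : (s * t) • x ∈ L := by
    rw [mul_smul]
    exact L.smul_mem s (hL x (ann0_antitone le_sup_right hx))
  simpa [hNL] using Submodule.mem_inf.2 ⟨hxN, hxL⟩

theorem SDAC.exists_mem_of_ann0_eq_bot {S : Set R} (hdac : SDAC S M) {I : Ideal R}
    (hI : ann0 R M I = ⊥) : ∃ u ∈ S, u ∈ I := by
  obtain ⟨u, hu, huI⟩ := hdac I
  refine ⟨u, hu, ?_⟩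
  simpa using huI 1 (by simp [hI, Submodule.annihilator_bot])

theorem SSmall.exists_mem_of_mem_sup {S : Set R} {I J : Ideal R} (hI : SSmall S I) {u : R}
    (hu : u ∈ S) (huIJ : u ∈ I ⊔ J) : ∃ v ∈ S, v ∈ J := by
  obtain ⟨v, hv, hvJ⟩ := hI J u hu fun m => Ideal.mul_mem_right m _ huIJ
  exact ⟨v, hv, by simpa using hvJ 1⟩

theorem stmt_10_general (S : Set R) (hS0 : (0:R) ∉ S) (hSm : ∀ s ∈ S, ∀ t ∈ S, s * t ∈ S)
    (htf : ∀ (r : R) (m : M), r • m = 0 → r = 0 ∨ m = 0)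
    (hcom : SComult S M) (hdac : SDAC S M)
    (N : Submodule R M) (I : Ideal R) (hI : SSmall S I)
    (s : R) (hs : s ∈ S) (h1 : ∀ x ∈ ann0 R M I, s • x ∈ N) :
    SEssential S N := by
  intro L hNL
  obtain ⟨t, ht, J, hJ1, hJ2⟩ := hcom L
  have hst : s * t ≠ 0 := fun h => hS0 (h ▸ hSm s hs t ht)
  have hbot : ann0 R M (I ⊔ J) = ⊥ := (Submodule.eq_bot_iff _).2 fun x hx =>
    (htf _ _ (mul_smul_eq_zero_of_mem_ann0_sup h1 hJ1 hNL hx)).resolve_left hst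
  obtain ⟨u, hu, huIJ⟩ := hdac.exists_mem_of_ann0_eq_bot hbot
  obtain ⟨v, hv, hvJ⟩ := hI.exists_mem_of_mem_sup hu huIJ
  exact ⟨v, hv, fun x hx => smul_eq_zero_of_mem_ann0 hvJ (hJ2 hx)⟩

theorem stmt_10 (S : Set R) (hS0 : (0:R) ∉ S) (hS1 : (1:R) ∈ S) (hSm : ∀ s ∈ S, ∀ t ∈ S, s * t ∈ S)
    (htf : ∀ (r : R) (m : M), r • m = 0 → r = 0 ∨ m = 0)
    (hcom : SComult S M) (hdac : SDAC S M)
    (N : Submodule R M) (I : Ideal R) (hI : SSmall S I)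
    (s : R) (hs : s ∈ S) (h1 : ∀ x ∈ ann0 R M I, s • x ∈ N) (h2 : N ≤ ann0 R M I) :
    SEssential S N :=
  stmt_10_general S hS0 hSm htf hcom hdac N I hI s hs h1
end

section
/- Let R be a commutative ring, S a multiplicatively closed subset of R, and M a distributive R-module. If N and K are S-copure submodules of M, then N ∩ K is an S-copure submodule of M. -/
variable {R : Type*} [CommRing R]

variable {M : Type*} [AddCommGroup M] [Module R M]

theorem sup_inf_right_of_inf_sup_left {α : Type*} [Lattice α]
    (hdist : ∀ a b c : α, a ⊓ (b ⊔ c) = a ⊓ b ⊔ a ⊓ c) (a b c : α) :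
    (a ⊔ c) ⊓ (b ⊔ c) = a ⊓ b ⊔ c :=
  letI := DistribLattice.ofInfSupLe fun a b c => (hdist a b c).le
  (sup_inf_right a b c).symm

theorem stmt_14_general (S : Set R) (hSm : ∀ s ∈ S, ∀ t ∈ S, s * t ∈ S)
    (hdist : ∀ A B C : Submodule R M, A ⊓ (B ⊔ C) = A ⊓ B ⊔ A ⊓ C)
    (N K : Submodule R M) (hN : SCopure S N) (hK : SCopure S K) :
    SCopure S (N ⊓ K) := by
  obtain ⟨s, hs, hNs⟩ := hN
  obtain ⟨t, ht, hKt⟩ := hK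
  refine ⟨s * t, hSm s hs t ht, fun I m hm => ?_⟩
  have hN' : (s * t) • m ∈ N ⊔ ann0 R M I := by
    rw [mul_comm, ← smul_smul]
    exact Submodule.smul_mem _ t (hNs I m fun a ha => (hm a ha).1)
  have hK' : (s * t) • m ∈ K ⊔ ann0 R M I := by
    rw [← smul_smul]
    exact Submodule.smul_mem _ s (hKt I m fun a ha => (hm a ha).2)
  rw [← sup_inf_right_of_inf_sup_left hdist]
  exact ⟨hN', hK'⟩

theorem stmt_14 (S : Set R) (hS0 : (0:R) ∉ S) (hS1 : (1:R) ∈ S) (hSm : ∀ s ∈ S, ∀ t ∈ S, s * t ∈ S)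
    (hdist : ∀ A B C : Submodule R M, A ⊓ (B ⊔ C) = A ⊓ B ⊔ A ⊓ C)
    (N K : Submodule R M) (hN : SCopure S N) (hK : SCopure S K) :
    SCopure S (N ⊓ K) :=
  stmt_14_general S hSm hdist N K hN hK
end

section
/- Let R be a commutative ring and S a multiplicatively closed subset of R with saturation S* = {x ∈ R : x/1 is a unit in S⁻¹R}. For any R-module M, every S-quasi-copure submodule of M is an S*-quasi-copure submodule of M. -/
/-!
Every element of the saturation `S*` divides an element of `S`. Hence an `S*`-prime submodule is
`S`-prime: its witness `t ∈ S*` may be replaced by a multiple `t * r ∈ S`. If it contains `N`, it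
is therefore `S`-copure, hence `S*`-copure because `S ⊆ S*`.
-/

variable {R : Type*} [CommRing R]

variable {M : Type*} [AddCommGroup M] [Module R M]

section ChangeOfMultiplicativeSet

variable {S T : Set R} {P N : Submodule R M}

theorem SCopure.mono (hST : S ⊆ T) (hP : SCopure S P) : SCopure T P :=
  let ⟨s, hs, h⟩ := hP
  ⟨s, hST hs, h⟩

theorem SPrime.of_superset (hST : S ⊆ T) (hTS : ∀ t ∈ T, ∃ s ∈ S, t ∣ s) (hP : SPrime T P) :
    SPrime S P := by
  obtain ⟨hdisj, t, ht, hprime⟩ := hP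
  obtain ⟨_, hs, r, rfl⟩ := hTS t ht
  refine ⟨Set.subset_empty_iff.mp (hdisj ▸ Set.inter_subset_inter_right _ hST), t * r, hs, ?_⟩
  intro a m ham
  rcases hprime a m ham with ha | hm
  · left
    rw [mul_right_comm, mul_comm]
    exact Ideal.mul_mem_left _ r ha
  · right
    rw [mul_comm, mul_smul]
    exact P.smul_mem r hm

theorem SQuasiCopure.of_subset (hST : S ⊆ T) (hTS : ∀ t ∈ T, ∃ s ∈ S, t ∣ s)
    (hN : SQuasiCopure S N) : SQuasiCopure T N :=
  fun P hP hNP ↦ (hN P (hP.of_superset hST hTS) hNP).mono hST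

end ChangeOfMultiplicativeSet

theorem stmt_17_general (S : Submonoid R)
    (N : Submodule R M) (hN : SQuasiCopure (S : Set R) N) :
    SQuasiCopure {x : R | IsUnit (algebraMap R (Localization S) x)} N :=
  hN.of_subset (fun s hs ↦ IsLocalization.map_units (Localization S) ⟨s, hs⟩)
    (fun _ ↦ IsLocalization.algebraMap_isUnit_iff S |>.mp)

theorem stmt_17 (S : Submonoid R) (hS0 : (0:R) ∉ (S : Set R))
    (N : Submodule R M) (hN : SQuasiCopure (S : Set R) N) :
    SQuasiCopure {x : R | IsUnit (algebraMap R (Localization S) x)} N :=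
  stmt_17_general S N hN
end
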